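/- arXiv:2109.11143 — 4 statements merged into one kernel-verified Lean document; each statement's English description precedes it below -/
import Mathlib

section
/- For every r ∈ EuclideanSpace ℝ (Fin n), the expected squared norm after one random Kaczmarz step satisfies the exact identity ∑_{j=1}^{n} (‖c_j‖²/‖C‖_F²)·‖T_j r‖² = ‖r‖² − ‖C.mulVec r‖²/‖C‖_F². -/
open scoped RealInnerProductSpace

/-- The `j`-th row of `C` as a vector in Euclidean space. -/
noncomputable def row {n : ℕ} (C : Matrix (Fin n) (Fin n) ℝ) (j : Fin n) :
    EuclideanSpace ℝ (Fin n) := (WithLp.equiv 2 (Fin n → ℝ)).symm (C j)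

/-- Matrix-vector multiplication, landing in Euclidean space. -/
noncomputable def mulVecE {n : ℕ} (C : Matrix (Fin n) (Fin n) ℝ)
    (v : EuclideanSpace ℝ (Fin n)) : EuclideanSpace ℝ (Fin n) :=
  (WithLp.equiv 2 (Fin n → ℝ)).symm (C.mulVec ((WithLp.equiv 2 (Fin n → ℝ)) v))

/-- Squared Frobenius norm. -/
noncomputable def frobSq {n : ℕ} (C : Matrix (Fin n) (Fin n) ℝ) : ℝ :=
  ∑ i, ∑ j, (C i j) ^ 2

open scoped Classical in
/-- Kaczmarz update for row `j`. -/
noncomputable def kacz {n : ℕ} (C : Matrix (Fin n) (Fin n) ℝ) (j : Fin n)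
    (y : EuclideanSpace ℝ (Fin n)) : EuclideanSpace ℝ (Fin n) :=
  if row C j = 0 then y
  else y - ((⟪y, row C j⟫) / ‖row C j‖ ^ 2) • row C j

/-- Kaczmarz iteration along an index sequence `j : Fin k → Fin n`,
applying `T_{j 0}` first and `T_{j (k-1)}` last. -/
noncomputable def kaczIter {n : ℕ} (C : Matrix (Fin n) (Fin n) ℝ) :
    (k : ℕ) → (Fin k → Fin n) → EuclideanSpace ℝ (Fin n) → EuclideanSpace ℝ (Fin n)
  | 0, _, y => y
  | (k + 1), j, y => kacz C (j (Fin.last k)) (kaczIter C k (fun i => j i.castSucc) y)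

/-! Each Kaczmarz step `T_j` is the orthogonal projection onto `c_jᗮ`, so by Pythagoras
`‖c_j‖² ‖T_j r‖² = ‖c_j‖² ‖r‖² - ⟪r, c_j⟫²`; multiplied through by `‖c_j‖²` this also holds
for a zero row. Summing over `j`, `∑ ‖c_j‖² = ‖C‖_F²` and `∑ ⟪r, c_j⟫² = ‖C r‖²`. -/

theorem sq_norm_mul_sq_norm_sub_proj {E : Type*} [NormedAddCommGroup E] [InnerProductSpace ℝ E]
    (y c : E) :
    ‖c‖ ^ 2 * ‖y - (⟪y, c⟫ / ‖c‖ ^ 2) • c‖ ^ 2 = ‖c‖ ^ 2 * ‖y‖ ^ 2 - ⟪y, c⟫ ^ 2 := by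
  rcases eq_or_ne c 0 with rfl | hc
  · simp
  have hc_norm : ‖c‖ ≠ 0 := norm_ne_zero_iff.mpr hc
  rw [norm_sub_sq_real, inner_smul_right, norm_smul, mul_pow, Real.norm_eq_abs, sq_abs]
  field_simp
  ring

section

variable {n : ℕ} (C : Matrix (Fin n) (Fin n) ℝ)

theorem sq_norm_row_mul_sq_norm_kacz (j : Fin n) (y : EuclideanSpace ℝ (Fin n)) :
    ‖row C j‖ ^ 2 * ‖kacz C j y‖ ^ 2 = ‖row C j‖ ^ 2 * ‖y‖ ^ 2 - ⟪y, row C j⟫ ^ 2 := by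
  unfold kacz
  split_ifs with h
  · simp [h]
  · exact sq_norm_mul_sq_norm_sub_proj y (row C j)

theorem sum_sq_norm_row : ∑ j, ‖row C j‖ ^ 2 = frobSq C := by
  simp [frobSq, EuclideanSpace.norm_sq_eq, row]

theorem frobSq_pos (hC : C ≠ 0) : 0 < frobSq C := by
  rw [← sum_sq_norm_row]
  have hnonneg : 0 ≤ fun j => ‖row C j‖ ^ 2 := fun j => sq_nonneg ‖row C j‖
  refine (Fintype.sum_nonneg hnonneg).lt_of_ne fun h => hC ?_
  funext j
  have hrow : row C j = 0 := by
    simpa using congrFun ((Fintype.sum_eq_zero_iff_of_nonneg hnonneg).mp h.symm) j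
  exact (WithLp.equiv 2 (Fin n → ℝ)).symm.injective hrow

theorem inner_row_eq_mulVecE_apply (y : EuclideanSpace ℝ (Fin n)) (j : Fin n) :
    ⟪y, row C j⟫ = mulVecE C y j := by
  simp [EuclideanSpace.inner_eq_star_dotProduct, row, mulVecE, Matrix.mulVec]

theorem sum_sq_inner_row (y : EuclideanSpace ℝ (Fin n)) :
    ∑ j, ⟪y, row C j⟫ ^ 2 = ‖mulVecE C y‖ ^ 2 := by
  simp [inner_row_eq_mulVecE_apply, EuclideanSpace.norm_sq_eq]

end

theorem kacz_expected_sq_norm_identity_general {n : ℕ}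
    (C : Matrix (Fin n) (Fin n) ℝ) (hC : C ≠ 0)
    (r : EuclideanSpace ℝ (Fin n)) :
    ∑ j, (‖row C j‖ ^ 2 / frobSq C) * ‖kacz C j r‖ ^ 2
      = ‖r‖ ^ 2 - ‖mulVecE C r‖ ^ 2 / frobSq C := by
  have hF : frobSq C ≠ 0 := (frobSq_pos C hC).ne'
  calc ∑ j, (‖row C j‖ ^ 2 / frobSq C) * ‖kacz C j r‖ ^ 2
      = ∑ j, (‖row C j‖ ^ 2 * ‖r‖ ^ 2 - ⟪r, row C j⟫ ^ 2) / frobSq C := by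
        simp only [div_mul_eq_mul_div, sq_norm_row_mul_sq_norm_kacz]
    _ = ((∑ j, ‖row C j‖ ^ 2) * ‖r‖ ^ 2 - ∑ j, ⟪r, row C j⟫ ^ 2) / frobSq C := by
        rw [← Finset.sum_div, Finset.sum_sub_distrib, Finset.sum_mul]
    _ = ‖r‖ ^ 2 - ‖mulVecE C r‖ ^ 2 / frobSq C := by
        rw [sum_sq_norm_row, sum_sq_inner_row]
        field_simp

/-- Exact identity for the expected squared norm after one
random Kaczmarz step. -/
theorem kacz_expected_sq_norm_identity {n : ℕ} (hn : 0 < n)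
    (C : Matrix (Fin n) (Fin n) ℝ) (hC : C ≠ 0)
    (r : EuclideanSpace ℝ (Fin n)) :
    ∑ j, (‖row C j‖ ^ 2 / frobSq C) * ‖kacz C j r‖ ^ 2
      = ‖r‖ ^ 2 - ‖mulVecE C r‖ ^ 2 / frobSq C :=
  kacz_expected_sq_norm_identity_general C hC r
end

section
/- (Lemma 2.) For any ε ∈ EuclideanSpace ℝ (Fin n) with εᵢ ∈ {−1,1} for all i, and any y ∈ EuclideanSpace ℝ (Fin n), let S = {i : Real.sign(yᵢ) ≠ εᵢ} be the set of coordinates where y and ε have different sign. Then ‖y − (⟪y, ε⟫/‖ε‖²)·ε‖² ≥ (min(#S, n − #S)/n)·‖y‖². -/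
open scoped RealInnerProductSpace

open Finset

/-! On coordinates outside `S` we have `εᵢ yᵢ = |yᵢ|`, and on `S` we have `εᵢ yᵢ = -|yᵢ|`, so
`⟪y, ε⟫ = ∑_{Sᶜ} |yᵢ| - ∑_S |yᵢ|` is a difference of two nonnegative sums. Its square is at most
the larger of their squares, which by Cauchy–Schwarz is at most `max(#S, n - #S) · ‖y‖²`.
As `‖ε‖² = n`, the component of `y` orthogonal to `ε` has squared norm `‖y‖² - ⟪y, ε⟫² / n`. -/

theorem norm_sub_inner_div_norm_sq_smul_sq {F : Type*} [NormedAddCommGroup F]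
    [InnerProductSpace ℝ F] (x v : F) :
    ‖x - (⟪x, v⟫ / ‖v‖ ^ 2) • v‖ ^ 2 = ‖x‖ ^ 2 - ⟪x, v⟫ ^ 2 / ‖v‖ ^ 2 := by
  rcases eq_or_ne v 0 with rfl | hv
  · simp
  rw [norm_sub_sq_real, real_inner_smul_right, norm_smul, mul_pow, Real.norm_eq_abs, sq_abs]
  field_simp
  ring

namespace Real

theorem sign_mul_self (a : ℝ) : sign a * a = |a| := by
  rcases lt_trichotomy a 0 with ha | rfl | ha
  · rw [sign_of_neg ha, abs_of_neg ha]; ring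
  · simp
  · rw [sign_of_pos ha, abs_of_pos ha]; ring

theorem mul_eq_neg_abs_of_sign_ne {a e : ℝ} (he : e = -1 ∨ e = 1) (h : sign a ≠ e) :
    e * a = -|a| := by
  rcases lt_trichotomy a 0 with ha | rfl | ha
  · rw [sign_of_neg ha] at h
    rw [he.resolve_left (Ne.symm h), abs_of_neg ha]; ring
  · simp
  · rw [sign_of_pos ha] at h
    rw [he.resolve_right (Ne.symm h), abs_of_pos ha]; ring

end Real

theorem sq_sub_le_sq_max {α : Type*} [Ring α] [LinearOrder α] [IsStrictOrderedRing α] {a b : α}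
    (ha : 0 ≤ a) (hb : 0 ≤ b) : (b - a) ^ 2 ≤ max a b ^ 2 :=
  sq_le_sq' (by grind) (by grind)

namespace EuclideanSpace

variable {ι : Type*} [Fintype ι]

theorem real_inner_eq_sum (x y : EuclideanSpace ℝ ι) : ⟪x, y⟫ = ∑ i, y i * x i := by
  simp [PiLp.inner_apply]

theorem norm_sq_eq_card_of_forall_eq_neg_one_or_one {ε : EuclideanSpace ℝ ι}
    (hε : ∀ i, ε i = -1 ∨ ε i = 1) : ‖ε‖ ^ 2 = Fintype.card ι := by
  rw [real_norm_sq_eq, Fintype.card_eq_sum_ones, Nat.cast_sum]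
  refine sum_congr rfl fun i _ => ?_
  rcases hε i with h | h <;> simp [h]

theorem sq_sum_abs_le_card_mul_norm_sq (y : EuclideanSpace ℝ ι) (T : Finset ι) :
    (∑ i ∈ T, |y i|) ^ 2 ≤ #T * ‖y‖ ^ 2 := calc
  (∑ i ∈ T, |y i|) ^ 2 ≤ #T * ∑ i ∈ T, |y i| ^ 2 := sq_sum_le_card_mul_sum_sq
  _ ≤ #T * ‖y‖ ^ 2 := by
    rw [real_norm_sq_eq]
    simp only [sq_abs]
    gcongr
    exact subset_univ T

theorem inner_eq_sum_compl_abs_sub_sum_abs_of_sign_mismatch [DecidableEq ι]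
    {ε : EuclideanSpace ℝ ι} (hε : ∀ i, ε i = -1 ∨ ε i = 1) (y : EuclideanSpace ℝ ι)
    {S : Finset ι} (hS : ∀ i, i ∈ S ↔ Real.sign (y i) ≠ ε i) :
    ⟪y, ε⟫ = ∑ i ∈ Sᶜ, |y i| - ∑ i ∈ S, |y i| := by
  rw [real_inner_eq_sum, ← sum_compl_add_sum S, sub_eq_add_neg, ← sum_neg_distrib]
  congr 1
  · refine sum_congr rfl fun i hi => ?_
    rw [← Real.sign_mul_self, not_not.1 (mt (hS i).2 (mem_compl.1 hi))]
  · exact sum_congr rfl fun i hi => Real.mul_eq_neg_abs_of_sign_ne (hε i) ((hS i).1 hi)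

theorem sq_inner_le_max_card_mul_norm_sq_of_sign_mismatch [DecidableEq ι]
    {ε : EuclideanSpace ℝ ι} (hε : ∀ i, ε i = -1 ∨ ε i = 1) (y : EuclideanSpace ℝ ι)
    {S : Finset ι} (hS : ∀ i, i ∈ S ↔ Real.sign (y i) ≠ ε i) :
    ⟪y, ε⟫ ^ 2 ≤ max #S #Sᶜ * ‖y‖ ^ 2 := by
  rw [inner_eq_sum_compl_abs_sub_sum_abs_of_sign_mismatch hε y hS]
  refine (sq_sub_le_sq_max (sum_nonneg fun i _ => abs_nonneg (y i))
    (sum_nonneg fun i _ => abs_nonneg (y i))).trans ?_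
  rcases max_choice (∑ i ∈ S, |y i|) (∑ i ∈ Sᶜ, |y i|) with h | h <;> rw [h]
  · exact (sq_sum_abs_le_card_mul_norm_sq y S).trans (by gcongr; exact_mod_cast le_max_left _ _)
  · exact (sq_sum_abs_le_card_mul_norm_sq y Sᶜ).trans (by gcongr; exact_mod_cast le_max_right _ _)

end EuclideanSpace

/-- **Lemma 2.** If `ε` has `±1` entries and `S` is the set of
coordinates where the sign of `y` disagrees with `ε`, then the component of `y`
orthogonal to `ε` has squared norm at least `min(#S, n - #S)/n · ‖y‖²`. -/
theorem sq_norm_orthogonal_component_ge_of_sign_mismatch {n : ℕ} (hn : 0 < n)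
    (ε : EuclideanSpace ℝ (Fin n)) (hε : ∀ i, ε i = -1 ∨ ε i = 1)
    (y : EuclideanSpace ℝ (Fin n)) (S : Finset (Fin n))
    (hS : ∀ i, i ∈ S ↔ Real.sign (y i) ≠ ε i) :
    ‖y - ((⟪y, ε⟫ / ‖ε‖ ^ 2) • ε)‖ ^ 2
      ≥ ((min S.card (n - S.card) : ℕ) : ℝ) / n * ‖y‖ ^ 2 := by
  have hε_norm : ‖ε‖ ^ 2 = n := by
    simpa using EuclideanSpace.norm_sq_eq_card_of_forall_eq_neg_one_or_one hε
  have hmax : (max #S #Sᶜ : ℕ) = (n : ℝ) - (min #S (n - #S) : ℕ) := by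
    have : #S ≤ n := by simpa using card_le_univ S
    rw [← Nat.cast_sub (by omega), card_compl, Fintype.card_fin]
    congr 1
    omega
  have hinner := EuclideanSpace.sq_inner_le_max_card_mul_norm_sq_of_sign_mismatch hε y hS
  rw [hmax] at hinner
  have hn' : (0 : ℝ) < n := by exact_mod_cast hn
  rw [norm_sub_inner_div_norm_sq_smul_sq, hε_norm, ge_iff_le, div_mul_eq_mul_div,
    le_sub_iff_add_le, ← add_div, div_le_iff₀ hn']
  linarith
end

section
/- For any ε ∈ EuclideanSpace ℝ (Fin n) with εᵢ ∈ {−1,1} for all i, and any y ∈ EuclideanSpace ℝ (Fin n), let S = {i : Real.sign(yᵢ) ≠ εᵢ}. Then ⟪y, ε⟫ ≤ √(n − #S)·‖y‖ and ⟪y, ε⟫ ≥ −√(#S)·‖y‖; consequently ⟪y, ε⟫² ≤ max(#S, n − #S)·‖y‖². -/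
open scoped RealInnerProductSpace

/-- Bounds on `⟪y, ε⟫` in terms of the number of sign
disagreements. -/
theorem inner_bounds_of_sign_mismatch {n : ℕ} (hn : 0 < n)
    (ε : EuclideanSpace ℝ (Fin n)) (hε : ∀ i, ε i = -1 ∨ ε i = 1)
    (y : EuclideanSpace ℝ (Fin n)) (S : Finset (Fin n))
    (hS : ∀ i, i ∈ S ↔ Real.sign (y i) ≠ ε i) :
    ⟪y, ε⟫ ≤ Real.sqrt ((n - S.card : ℕ) : ℝ) * ‖y‖ ∧
    ⟪y, ε⟫ ≥ -(Real.sqrt (S.card : ℝ) * ‖y‖) ∧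
    ⟪y, ε⟫ ^ 2 ≤ ((max S.card (n - S.card) : ℕ) : ℝ) * ‖y‖ ^ 2 := by
  classical
  -- Cauchy–Schwarz over a subset
  have hsum : ∀ T : Finset (Fin n), ∑ i ∈ T, |y i| ≤ Real.sqrt T.card * ‖y‖ := by
    intro T
    have h1 : (∑ i ∈ T, |y i|) ^ 2 ≤ (T.card : ℝ) * ∑ i ∈ T, |y i| ^ 2 := by
      have := sq_sum_le_card_mul_sum_sq (s := T) (f := fun i => |y i|)
      exact_mod_cast this
    have h2 : ∑ i ∈ T, |y i| ^ 2 ≤ ‖y‖ ^ 2 := by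
      have hnorm : ‖y‖ ^ 2 = ∑ i, (y i) ^ 2 := by
        rw [EuclideanSpace.norm_eq, Real.sq_sqrt (by positivity)]
        simp [sq_abs]
      rw [hnorm]
      have : ∑ i ∈ T, |y i| ^ 2 = ∑ i ∈ T, (y i) ^ 2 := by simp [sq_abs]
      rw [this]
      exact Finset.sum_le_sum_of_subset_of_nonneg (Finset.subset_univ T)
        (fun i _ _ => sq_nonneg _)
    have h3 : (∑ i ∈ T, |y i|) ^ 2 ≤ ((Real.sqrt T.card) * ‖y‖) ^ 2 := by
      rw [mul_pow, Real.sq_sqrt (by positivity)]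
      calc (∑ i ∈ T, |y i|) ^ 2 ≤ (T.card : ℝ) * ∑ i ∈ T, |y i| ^ 2 := h1
        _ ≤ (T.card : ℝ) * ‖y‖ ^ 2 := by
            exact mul_le_mul_of_nonneg_left h2 (by positivity)
    have hnn : (0:ℝ) ≤ ∑ i ∈ T, |y i| := Finset.sum_nonneg fun i _ => abs_nonneg _
    have hb : (0:ℝ) ≤ Real.sqrt T.card * ‖y‖ := by positivity
    calc ∑ i ∈ T, |y i| = Real.sqrt ((∑ i ∈ T, |y i|) ^ 2) := (Real.sqrt_sq hnn).symm
      _ ≤ Real.sqrt ((Real.sqrt T.card * ‖y‖) ^ 2) := Real.sqrt_le_sqrt h3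
      _ = Real.sqrt T.card * ‖y‖ := Real.sqrt_sq hb
  -- pointwise values
  have hin : ∀ i ∈ S, y i * ε i = -|y i| := by
    intro i hi
    have h := (hS i).1 hi
    rcases lt_trichotomy (y i) 0 with h0 | h0 | h0
    · have hs : Real.sign (y i) = -1 := Real.sign_of_neg h0
      rcases hε i with he | he
      · exact absurd (hs.trans he.symm) h
      · rw [he, abs_of_neg h0]; ring
    · simp [h0]
    · have hs : Real.sign (y i) = 1 := Real.sign_of_pos h0
      rcases hε i with he | he
      · rw [he, abs_of_pos h0]; ring
      · exact absurd (hs.trans he.symm) h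
  have hout : ∀ i ∈ Sᶜ, y i * ε i = |y i| := by
    intro i hi
    have h : Real.sign (y i) = ε i := by
      by_contra hc
      exact (Finset.mem_compl.mp hi) ((hS i).2 hc)
    rcases lt_trichotomy (y i) 0 with h0 | h0 | h0
    · have hs : Real.sign (y i) = -1 := Real.sign_of_neg h0
      rw [hs] at h; rw [← h, abs_of_neg h0]; ring
    · simp [h0]
    · have hs : Real.sign (y i) = 1 := Real.sign_of_pos h0
      rw [hs] at h; rw [← h, abs_of_pos h0]; ring
  have hinner : ⟪y, ε⟫ = (∑ i ∈ Sᶜ, |y i|) - ∑ i ∈ S, |y i| := by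
    have : ⟪y, ε⟫ = ∑ i, y i * ε i := by
      simp [PiLp.inner_apply, RCLike.inner_apply, mul_comm]
    rw [this, ← Finset.sum_add_sum_compl S (fun i => y i * ε i),
        Finset.sum_congr rfl hin, Finset.sum_congr rfl hout]
    rw [Finset.sum_neg_distrib]
    ring
  have hScard : ((Sᶜ : Finset (Fin n)).card : ℝ) = ((n - S.card : ℕ) : ℝ) := by
    rw [Finset.card_compl]
    simp
  have hSnn : (0:ℝ) ≤ ∑ i ∈ S, |y i| := Finset.sum_nonneg fun i _ => abs_nonneg _
  have hScnn : (0:ℝ) ≤ ∑ i ∈ Sᶜ, |y i| := Finset.sum_nonneg fun i _ => abs_nonneg _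
  have upper : ⟪y, ε⟫ ≤ Real.sqrt ((n - S.card : ℕ) : ℝ) * ‖y‖ := by
    rw [hinner, ← hScard]
    have := hsum Sᶜ
    linarith
  have lower : ⟪y, ε⟫ ≥ -(Real.sqrt (S.card : ℝ) * ‖y‖) := by
    rw [hinner]
    have := hsum S
    linarith
  refine ⟨upper, lower, ?_⟩
  have hm1 : Real.sqrt ((n - S.card : ℕ) : ℝ) ≤ Real.sqrt ((max S.card (n - S.card) : ℕ) : ℝ) :=
    Real.sqrt_le_sqrt (by exact_mod_cast le_max_right _ _)
  have hm2 : Real.sqrt ((S.card : ℕ) : ℝ) ≤ Real.sqrt ((max S.card (n - S.card) : ℕ) : ℝ) :=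
    Real.sqrt_le_sqrt (by exact_mod_cast le_max_left _ _)
  have habs : |⟪y, ε⟫| ≤ Real.sqrt ((max S.card (n - S.card) : ℕ) : ℝ) * ‖y‖ := by
    rw [abs_le]
    constructor
    · have := mul_le_mul_of_nonneg_right hm2 (norm_nonneg y)
      linarith
    · have := mul_le_mul_of_nonneg_right hm1 (norm_nonneg y)
      linarith
  calc ⟪y, ε⟫ ^ 2 = |⟪y, ε⟫| ^ 2 := (sq_abs _).symm
    _ ≤ (Real.sqrt ((max S.card (n - S.card) : ℕ) : ℝ) * ‖y‖) ^ 2 :=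
        pow_le_pow_left₀ (abs_nonneg _) habs 2
    _ = ((max S.card (n - S.card) : ℕ) : ℝ) * ‖y‖ ^ 2 := by
        rw [mul_pow, Real.sq_sqrt (by positivity)]
end

section
/- Assume ε ∈ EuclideanSpace ℝ (Fin n) has εᵢ ∈ {−1,1} for all i and C.mulVec ε = 0. Then for every k, every index sequence j : Fin k → Fin n, and every starting vector y₀, the iterate satisfies the deterministic lower bound ‖y_k(j, y₀)‖² ≥ ⟪y₀, ε⟫²/n. -/
open scoped RealInnerProductSpace

lemma sq_inner_div_norm_sq_le {E : Type*} [NormedAddCommGroup E] [InnerProductSpace ℝ E]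
    (x v : E) : ⟪x, v⟫ ^ 2 / ‖v‖ ^ 2 ≤ ‖x‖ ^ 2 := by
  refine div_le_of_le_mul₀ (by positivity) (by positivity) ?_
  calc ⟪x, v⟫ ^ 2 = |⟪x, v⟫| ^ 2 := (sq_abs _).symm
    _ ≤ (‖x‖ * ‖v‖) ^ 2 := pow_le_pow_left₀ (abs_nonneg _) (abs_real_inner_le_norm x v) 2
    _ = ‖x‖ ^ 2 * ‖v‖ ^ 2 := mul_pow _ _ _

lemma EuclideanSpace.norm_sq_eq_card_of_sign {ι : Type*} [Fintype ι] (ε : EuclideanSpace ℝ ι)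
    (hε : ∀ i, ε i = -1 ∨ ε i = 1) : ‖ε‖ ^ 2 = Fintype.card ι := by
  have hsq (i : ι) : ε i ^ 2 = 1 := by rcases hε i with h | h <;> simp [h]
  simp [EuclideanSpace.real_norm_sq_eq, hsq]

lemma mulVecE_apply {n : ℕ} (C : Matrix (Fin n) (Fin n) ℝ) (v : EuclideanSpace ℝ (Fin n))
    (i : Fin n) : mulVecE C v i = ⟪row C i, v⟫ := by
  simp [mulVecE, row, PiLp.inner_apply, Matrix.mulVec, dotProduct, mul_comm]

lemma inner_row_eq_zero_of_mulVecE_eq_zero {n : ℕ} {C : Matrix (Fin n) (Fin n) ℝ}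
    {v : EuclideanSpace ℝ (Fin n)} (hv : mulVecE C v = 0) (i : Fin n) : ⟪row C i, v⟫ = 0 := by
  rw [← mulVecE_apply, hv, PiLp.zero_apply]

lemma inner_kacz_of_inner_row_eq_zero {n : ℕ} {C : Matrix (Fin n) (Fin n) ℝ} {j : Fin n}
    {v : EuclideanSpace ℝ (Fin n)} (hv : ⟪row C j, v⟫ = 0) (y : EuclideanSpace ℝ (Fin n)) :
    ⟪kacz C j y, v⟫ = ⟪y, v⟫ := by
  unfold kacz
  split_ifs
  · rfl
  · rw [inner_sub_left, inner_smul_left, hv, mul_zero, sub_zero]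

lemma inner_kaczIter_of_mulVecE_eq_zero {n : ℕ} {C : Matrix (Fin n) (Fin n) ℝ}
    {v : EuclideanSpace ℝ (Fin n)} (hv : mulVecE C v = 0) :
    ∀ (k : ℕ) (j : Fin k → Fin n) (y : EuclideanSpace ℝ (Fin n)),
      ⟪kaczIter C k j y, v⟫ = ⟪y, v⟫
  | 0, _, _ => rfl
  | k + 1, j, y => by
    rw [kaczIter, inner_kacz_of_inner_row_eq_zero (inner_row_eq_zero_of_mulVecE_eq_zero hv _),
      inner_kaczIter_of_mulVecE_eq_zero hv]

theorem kacz_iterate_sq_norm_lower_bound_general {n : ℕ}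
    (C : Matrix (Fin n) (Fin n) ℝ)
    (ε : EuclideanSpace ℝ (Fin n)) (hε1 : ∀ i, ε i = -1 ∨ ε i = 1)
    (hε : mulVecE C ε = 0)
    (k : ℕ) (j : Fin k → Fin n) (y₀ : EuclideanSpace ℝ (Fin n)) :
    ‖kaczIter C k j y₀‖ ^ 2 ≥ ⟪y₀, ε⟫ ^ 2 / n := by
  have hnorm : ‖ε‖ ^ 2 = n := by
    simpa using EuclideanSpace.norm_sq_eq_card_of_sign ε hε1
  rw [← hnorm, ← inner_kaczIter_of_mulVecE_eq_zero hε k j y₀]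
  exact sq_inner_div_norm_sq_le _ _

/-- Deterministic lower bound `‖y_k‖² ≥ ⟪y₀, ε⟫² / n` for every
Kaczmarz iterate. -/
theorem kacz_iterate_sq_norm_lower_bound {n : ℕ} (hn : 0 < n)
    (C : Matrix (Fin n) (Fin n) ℝ) (hC : C ≠ 0)
    (ε : EuclideanSpace ℝ (Fin n)) (hε1 : ∀ i, ε i = -1 ∨ ε i = 1)
    (hε : mulVecE C ε = 0)
    (k : ℕ) (j : Fin k → Fin n) (y₀ : EuclideanSpace ℝ (Fin n)) :
    ‖kaczIter C k j y₀‖ ^ 2 ≥ ⟪y₀, ε⟫ ^ 2 / n :=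
  kacz_iterate_sq_norm_lower_bound_general C ε hε1 hε k j y₀
end
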